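/- arXiv:1112.3168 — 2 statements merged into one kernel-verified Lean document; each statement's English description precedes it below -/
import Mathlib

section
/- For every odd integer m ≥ 1, the set CBFS₂(2m+2) is a non-expandable cross-bifix-free set on BF₂(2m+2); that is, for every bifix-free binary word γ of length 2m+2 with γ ∉ CBFS₂(2m+2), there exists ω ∈ CBFS₂(2m+2) such that some nonempty proper prefix of γ is a suffix of ω, or some nonempty proper prefix of ω is a suffix of γ. -/
/-- A binary word (as a list of Booleans, `true` = 1, `false` = 0) is a Dyck word
if it has as many 1s as 0s and every prefix has at least as many 1s as 0s. -/
def IsDyck (w : List Bool) : Prop :=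
  w.count true = w.count false ∧
  ∀ p : List Bool, p <+: w → p.count false ≤ p.count true

/-- `DyckLen w n` : `w` is a Dyck word of length `n`. -/
def DyckLen (w : List Bool) (n : ℕ) : Prop := IsDyck w ∧ w.length = n

/-- A word is bifix-free if no nonempty proper prefix of it is also a suffix of it. -/
def BifixFree {A : Type*} (w : List A) : Prop :=
  ∀ p : List A, p ≠ [] → p <+: w → p ≠ w → ¬ p <:+ w

/-- Two (distinct, same-length) words are cross-bifix-free if no nonempty proper
prefix of either one is a suffix of the other. -/
def CrossBifixFree {A : Type*} (w w' : List A) : Prop :=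
  (∀ p : List A, p ≠ [] → p <+: w → p ≠ w → ¬ p <:+ w') ∧
  (∀ p : List A, p ≠ [] → p <+: w' → p ≠ w' → ¬ p <:+ w)

/-- The set of bifix-free binary words of length `n`. -/
def BF (n : ℕ) : Set (List Bool) := {w | w.length = n ∧ BifixFree w}

/-- `CBFS₂(2m+1)` : words `1·α` where `α` is a Dyck word of length `2m`. -/
def CBFSodd (m : ℕ) : Set (List Bool) :=
  {w | ∃ α : List Bool, DyckLen α (2 * m) ∧ w = true :: α}

/-- `CBFS₂(2m+2)` for even `m > 1` : words `α·1·β·0` with `α` a Dyck word of length `2i`,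
`β` a Dyck word of length `2(m-i)`, `0 ≤ i ≤ m/2`. -/
def CBFSevenE (m : ℕ) : Set (List Bool) :=
  {w | ∃ (i : ℕ) (α β : List Bool), i ≤ m / 2 ∧ DyckLen α (2 * i) ∧
    DyckLen β (2 * (m - i)) ∧ w = α ++ true :: β ++ [false]}

/-- `CBFS₂(2m+2)` for odd `m ≥ 1` : words `α·1·β·0` with `α` a Dyck word of length `2i`,
`β` a Dyck word of length `2(m-i)`, `0 ≤ i ≤ (m+1)/2`, excluding the words
`1·α'·0·1·β'·0` with `α'`, `β'` Dyck words of length `m-1`. -/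
def CBFSevenO (m : ℕ) : Set (List Bool) :=
  {w | ∃ (i : ℕ) (α β : List Bool), i ≤ (m + 1) / 2 ∧ DyckLen α (2 * i) ∧
    DyckLen β (2 * (m - i)) ∧ w = α ++ true :: β ++ [false]} \
  {w | ∃ α' β' : List Bool, DyckLen α' (m - 1) ∧ DyckLen β' (m - 1) ∧
    w = true :: α' ++ false :: true :: β' ++ [false]}


/-!
Read a binary word as a lattice path (`1` up, `0` down). If `γ` dips below zero, its shortest
such prefix `p·0` (`p` a Dyck word) is a suffix of `1·(10)^k·p·0 ∈ CBFS₂(2m+2)`. If `γ` ends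
above zero, then after the last up-step from one below its final height it reads `1·s` with `s`
a Dyck word, a prefix of `1·s·(10)^k·0`. Otherwise `γ` is a Dyck word, `γ = α·1·β·0` by its
last arch. If `|α| > m + 1`, the arch `1·β·0` begins `1·β·0·1·(10)^k·0`; otherwise `γ` lies in
the excluded family `1·α'·0·1·β'·0`, and `1·α'·0` is a suffix of `(10)^((m+1)/2)·1·α'·0`
(for `m = 1` the word `1010` is not bifix-free). Membership of all these witnesses rests on the
uniqueness of the last-arch decomposition of a Dyck word.
-/

namespace List

theorem prefix_append_cases {α : Type*} {p l₁ l₂ : List α} (h : p <+: l₁ ++ l₂) :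
    p <+: l₁ ∨ ∃ t, t <+: l₂ ∧ p = l₁ ++ t := by
  rcases le_total p.length l₁.length with hle | hle
  · exact .inl ((isPrefix_append_of_length hle).1 h)
  · obtain ⟨t, rfl⟩ := prefix_of_prefix_length_le (prefix_append l₁ l₂) h hle
    exact .inr ⟨t, (prefix_append_right_inj l₁).1 h, rfl⟩

end List

theorem isDyck_iff_forall_suffix {w : List Bool} :
    IsDyck w ↔ w.count true = w.count false ∧
      ∀ t, t <:+ w → t.count true ≤ t.count false := by
  refine ⟨fun h => ⟨h.1, ?_⟩, fun h => ⟨h.1, ?_⟩⟩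
  · rintro t ⟨s, rfl⟩
    have := h.1
    have := h.2 s (List.prefix_append s t)
    simp only [List.count_append] at *
    omega
  · rintro p ⟨t, rfl⟩
    have := h.1
    have := h.2 t (List.suffix_append p t)
    simp only [List.count_append] at *
    omega

namespace IsDyck

theorem nil : IsDyck [] := ⟨rfl, fun p hp => by simp [List.prefix_nil.1 hp]⟩

theorem length_eq {w : List Bool} (h : IsDyck w) : w.length = 2 * w.count true := by
  have := w.count_true_add_count_false
  have := h.1
  omega

theorem append {a b : List Bool} (ha : IsDyck a) (hb : IsDyck b) : IsDyck (a ++ b) := by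
  refine ⟨by simp [List.count_append, ha.1, hb.1], fun p hp => ?_⟩
  rcases List.prefix_append_cases hp with hp | ⟨t, ht, rfl⟩
  · exact ha.2 p hp
  · have := ha.1
    have := hb.2 t ht
    simp only [List.count_append]
    omega

theorem arch {w : List Bool} (h : IsDyck w) : IsDyck (true :: w ++ [false]) := by
  refine ⟨by simp [h.1], fun p hp => ?_⟩
  rw [List.cons_append, List.prefix_cons_iff] at hp
  rcases hp with rfl | ⟨t, rfl, ht⟩
  · simp
  rcases List.prefix_concat_iff.1 ht with rfl | ht
  · simp [h.1]
  · have := h.2 t ht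
    simp
    omega

theorem eq_true_cons {w : List Bool} (h : IsDyck w) (hw : w ≠ []) : ∃ v, w = true :: v := by
  obtain ⟨b, v, rfl⟩ := List.exists_cons_of_ne_nil hw
  cases b
  · have := h.2 [false] (by simp)
    simp at this
  · exact ⟨v, rfl⟩

end IsDyck

def zigzag : ℕ → List Bool
  | 0 => []
  | k + 1 => true :: false :: zigzag k

@[simp] theorem length_zigzag (k : ℕ) : (zigzag k).length = 2 * k := by
  induction k with
  | zero => rfl
  | succ k ih => simp only [zigzag, List.length_cons, ih]; omega

theorem isDyck_zigzag : ∀ k, IsDyck (zigzag k)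
  | 0 => IsDyck.nil
  | k + 1 => IsDyck.nil.arch.append (isDyck_zigzag k)

theorem exists_eq_append_false_cons_of_prefix {w : List Bool}
    (h : ∃ p, p <+: w ∧ p.count true < p.count false) :
    ∃ p r, IsDyck p ∧ w = p ++ false :: r := by
  induction w using List.reverseRecOn with
  | nil =>
    obtain ⟨p, hp, hlt⟩ := h
    simp [List.prefix_nil.1 hp] at hlt
  | append_singleton v b ih =>
    by_cases hv : ∃ p, p <+: v ∧ p.count true < p.count false
    · obtain ⟨p, r, hp, rfl⟩ := ih hv
      exact ⟨p, r ++ [b], hp, by simp⟩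
    push Not at hv
    obtain ⟨p, hp, hlt⟩ := h
    rcases List.prefix_concat_iff.1 hp with rfl | hp
    · have := hv v List.prefix_rfl
      cases b
      · exact ⟨v, [], ⟨by simp at hlt; omega, hv⟩, rfl⟩
      · simp at hlt
        omega
    · exact absurd hlt (not_lt.2 (hv p hp))

theorem exists_eq_append_true_cons_of_suffix {w : List Bool}
    (h : ∃ t, t <:+ w ∧ t.count false < t.count true) :
    ∃ q s, IsDyck s ∧ w = q ++ true :: s := by
  induction w with
  | nil =>
    obtain ⟨t, ht, hlt⟩ := h
    simp [List.suffix_nil.1 ht] at hlt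
  | cons b v ih =>
    by_cases hv : ∃ t, t <:+ v ∧ t.count false < t.count true
    · obtain ⟨q, s, hs, rfl⟩ := ih hv
      exact ⟨b :: q, s, hs, rfl⟩
    push Not at hv
    obtain ⟨t, ht, hlt⟩ := h
    rcases List.suffix_cons_iff.1 ht with rfl | ht
    · have := hv v List.suffix_rfl
      cases b
      · simp at hlt
        omega
      · exact ⟨[], v, isDyck_iff_forall_suffix.2 ⟨by simp at hlt; omega, hv⟩, rfl⟩
    · exact absurd hlt (not_lt.2 (hv t ht))

theorem IsDyck.exists_eq_append_arch {w : List Bool} (h : IsDyck w) (hw : w ≠ []) :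
    ∃ α β, IsDyck α ∧ IsDyck β ∧ w = α ++ true :: β ++ [false] := by
  obtain ⟨v, b, rfl⟩ : ∃ v b, w = v ++ [b] :=
    ⟨w.dropLast, w.getLast hw, (List.dropLast_append_getLast hw).symm⟩
  have hb : b = false := by
    have := (isDyck_iff_forall_suffix.1 h).2 [b] (List.suffix_append v [b])
    cases b <;> simp_all
  subst hb
  have hcount := h.1
  simp only [List.count_append] at hcount
  obtain ⟨α, β, hβ, rfl⟩ :=
    exists_eq_append_true_cons_of_suffix ⟨v, List.suffix_rfl, by simp at hcount; omega⟩
  refine ⟨α, β, ⟨?_, fun p hp => h.2 p (hp.trans (by simp))⟩, hβ, rfl⟩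
  have := hβ.1
  simp at hcount
  omega

theorem IsDyck.eq_of_append_arch_eq {α β α' β' : List Bool} (hα : IsDyck α) (hβ : IsDyck β)
    (hα' : IsDyck α') (hβ' : IsDyck β')
    (h : α ++ true :: β ++ [false] = α' ++ true :: β' ++ [false]) : α = α' := by
  wlog hle : α.length ≤ α'.length generalizing α β α' β'
  · exact (this hα' hβ' hα hβ h.symm (by omega)).symm
  have hlen := congrArg List.length h
  simp only [List.length_append, List.length_cons, List.length_nil] at hlen
  rcases hle.eq_or_lt with heq | hlt
  · exact (List.append_inj (by simpa using h) heq).1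
  exfalso
  have hpre : α' <+: α ++ (true :: β ++ [false]) := ⟨true :: β' ++ [false], by simpa using h.symm⟩
  rcases List.prefix_append_cases hpre with hpre | ⟨t, ht, rfl⟩
  · exact absurd hpre.length_le (by omega)
  rw [List.cons_append, List.prefix_cons_iff] at ht
  rcases ht with rfl | ⟨u, rfl, hu⟩
  · simp at hlt
  rcases List.prefix_concat_iff.1 hu with rfl | hu
  · simp at hlen
    omega
  have := hα.1
  have := hβ.2 u hu
  have := hα'.1
  simp at this
  omega

theorem mem_CBFSevenO {m : ℕ} {α β : List Bool} (hα : IsDyck α) (hβ : IsDyck β)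
    (hlen : α.length + β.length = 2 * m) (hαm : α.length ≤ m + 1)
    (hα_ne : ∀ α', IsDyck α' → α'.length = m - 1 → α ≠ true :: α' ++ [false]) :
    α ++ true :: β ++ [false] ∈ CBFSevenO m := by
  have := hα.length_eq
  refine ⟨⟨α.count true, α, β, by omega, ⟨hα, this⟩, ⟨hβ, by omega⟩, rfl⟩, ?_⟩
  rintro ⟨α', β', ⟨hα', hα'len⟩, ⟨hβ', -⟩, h⟩
  exact hα_ne α' hα' hα'len (hα.eq_of_append_arch_eq hβ hα'.arch hβ' (by simpa using h))

def IsBlockedBy {A : Type*} (S : Set (List A)) (γ : List A) : Prop :=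
  ∃ ω ∈ S, ¬ CrossBifixFree γ ω

section IsBlockedBy

variable {A : Type*} {S : Set (List A)} {γ ω p : List A}

theorem IsBlockedBy.of_prefix_suffix (hω : ω ∈ S) (hp : p ≠ []) (hpγ : p <+: γ) (hne : p ≠ γ)
    (hpω : p <:+ ω) : IsBlockedBy S γ :=
  ⟨ω, hω, fun h => h.1 p hp hpγ hne hpω⟩

theorem IsBlockedBy.of_suffix_prefix (hω : ω ∈ S) (hp : p ≠ []) (hpω : p <+: ω) (hne : p ≠ ω)
    (hpγ : p <:+ γ) : IsBlockedBy S γ :=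
  ⟨ω, hω, fun h => h.2 p hp hpω hne hpγ⟩

end IsBlockedBy

section Blocking

variable {m : ℕ}

theorem isBlockedBy_append_false_cons {p r : List Bool} (hp : IsDyck p)
    (hlen : (p ++ false :: r).length = 2 * m + 2) :
    IsBlockedBy (CBFSevenO m) (p ++ false :: r) := by
  have hpl := hp.length_eq
  simp only [List.length_append, List.length_cons] at hlen
  have hω := mem_CBFSevenO (m := m) IsDyck.nil ((isDyck_zigzag (m - p.count true)).append hp)
    (by simp; omega) (by simp) (by simp)
  have hr : r ≠ [] := by
    rintro rfl
    simp at hlen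
    omega
  exact .of_prefix_suffix hω (p := p ++ [false]) (by simp) ⟨r, by simp⟩ (by simpa using hr)
    ⟨true :: zigzag (m - p.count true), by simp⟩

theorem isBlockedBy_append_true_cons {q s : List Bool} (hs : IsDyck s)
    (hlen : (q ++ true :: s).length = 2 * m + 2) :
    IsBlockedBy (CBFSevenO m) (q ++ true :: s) := by
  have hsl := hs.length_eq
  simp only [List.length_append, List.length_cons] at hlen
  have hω := mem_CBFSevenO (m := m) IsDyck.nil (hs.append (isDyck_zigzag (m - s.count true)))
    (by simp; omega) (by simp) (by simp)
  refine .of_suffix_prefix hω (p := true :: s) (by simp)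
    ⟨zigzag (m - s.count true) ++ [false], by simp⟩ ?_ ⟨q, rfl⟩
  intro h
  have := congrArg List.length h
  simp at this

theorem isBlockedBy_append_arch_of_lt_length {α β : List Bool} (hβ : IsDyck β)
    (hlen : (α ++ true :: β ++ [false]).length = 2 * m + 2) (hαm : m + 1 < α.length) :
    IsBlockedBy (CBFSevenO m) (α ++ true :: β ++ [false]) := by
  have hβl := hβ.length_eq
  simp only [List.length_append, List.length_cons, List.length_nil] at hlen
  have hω := mem_CBFSevenO (m := m) hβ.arch (isDyck_zigzag (m - 1 - β.count true))
    (by simp; omega) (by simp; omega) fun α' _ hα'len h => by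
      have := congrArg List.length h
      simp at this
      omega
  refine .of_suffix_prefix hω (p := true :: β ++ [false]) (by simp)
    ⟨true :: zigzag (m - 1 - β.count true) ++ [false], by simp⟩ ?_ ⟨α, by simp⟩
  intro h
  have := congrArg List.length h
  simp at this

theorem isBlockedBy_excluded (hmo : Odd m) (hm : 3 ≤ m) {α' β : List Bool} (hα' : IsDyck α')
    (hα'len : α'.length = m - 1) :
    IsBlockedBy (CBFSevenO m) (true :: α' ++ [false] ++ true :: β ++ [false]) := by
  obtain ⟨j, rfl⟩ := hmo
  have hω := mem_CBFSevenO (m := 2 * j + 1) (isDyck_zigzag (j + 1)) hα'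
    (by simp; omega) (by simp; omega)
    fun α'' hα'' hα''len h => by
      obtain ⟨v, rfl⟩ := hα''.eq_true_cons (by rintro rfl; simp at hα''len; omega)
      simp [zigzag] at h
  refine .of_prefix_suffix hω (p := true :: α' ++ [false]) (by simp)
    ⟨true :: β ++ [false], by simp⟩ ?_ ⟨zigzag (j + 1), by simp⟩
  intro h
  have := congrArg List.length h
  simp at this

end Blocking

theorem CBFSevenO_nonexpandable_general (m : ℕ) (hmo : Odd m) (γ : List Bool)
    (hγ : γ ∈ BF (2 * m + 2)) (hγn : γ ∉ CBFSevenO m) :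
    ∃ ω ∈ CBFSevenO m,
      (∃ p : List Bool, p ≠ [] ∧ p <+: γ ∧ p ≠ γ ∧ p <:+ ω) ∨
      (∃ p : List Bool, p ≠ [] ∧ p <+: ω ∧ p ≠ ω ∧ p <:+ γ) := by
  obtain ⟨hlen, hbf⟩ := hγ
  suffices hblock : IsBlockedBy (CBFSevenO m) γ by
    obtain ⟨ω, hω, h⟩ := hblock
    refine ⟨ω, hω, ?_⟩
    simpa only [CrossBifixFree, not_and_or, not_forall, not_not, exists_prop] using h
  by_cases hdesc : ∃ p, p <+: γ ∧ p.count true < p.count false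
  · obtain ⟨p, r, hp, rfl⟩ := exists_eq_append_false_cons_of_prefix hdesc
    exact isBlockedBy_append_false_cons hp hlen
  by_cases hasc : γ.count false < γ.count true
  · obtain ⟨q, s, hs, rfl⟩ := exists_eq_append_true_cons_of_suffix ⟨γ, List.suffix_rfl, hasc⟩
    exact isBlockedBy_append_true_cons hs hlen
  push Not at hdesc hasc
  have hγD : IsDyck γ := ⟨le_antisymm hasc (hdesc γ List.prefix_rfl), hdesc⟩
  obtain ⟨α, β, hα, hβ, rfl⟩ := hγD.exists_eq_append_arch (by rintro rfl; simp at hlen)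
  by_cases hαm : m + 1 < α.length
  · exact isBlockedBy_append_arch_of_lt_length hβ hlen hαm
  obtain ⟨α', hα', hα'len, rfl⟩ :
      ∃ α', IsDyck α' ∧ α'.length = m - 1 ∧ α = true :: α' ++ [false] := by
    by_contra! h
    exact hγn (mem_CBFSevenO hα hβ (by simp at hlen; omega) (by omega) h)
  obtain rfl | hm3 : m = 1 ∨ 3 ≤ m := by obtain ⟨j, rfl⟩ := hmo; omega
  · obtain rfl : α' = [] := List.eq_nil_of_length_eq_zero hα'len
    obtain rfl : β = [] := by simpa using hlen
    exact absurd hbf fun h => h [true, false] (by simp) (by decide) (by decide) (by decide)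
  · exact isBlockedBy_excluded hmo hm3 hα' hα'len

/-- For every odd `m ≥ 1`, `CBFS₂(2m+2)` is a non-expandable
cross-bifix-free set on `BF₂(2m+2)`. -/
theorem CBFSevenO_nonexpandable (m : ℕ) (hm : 1 ≤ m) (hmo : Odd m) (γ : List Bool)
    (hγ : γ ∈ BF (2 * m + 2)) (hγn : γ ∉ CBFSevenO m) :
    ∃ ω ∈ CBFSevenO m,
      (∃ p : List Bool, p ≠ [] ∧ p <+: γ ∧ p ≠ γ ∧ p <:+ ω) ∨
      (∃ p : List Bool, p ≠ [] ∧ p <+: ω ∧ p ≠ ω ∧ p <:+ γ) :=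
  CBFSevenO_nonexpandable_general m hmo γ hγ hγn
end

section
/- Let w be a binary word that begins with 1, ends with 0, and satisfies |w|₁ − |w|₀ = −r with r > 0. Then w can be written as w = α_r·0·α_{r−1}·0·⋯·0·α₁·0·φ, where each α_j (1 ≤ j ≤ r) is a Dyck word (possibly empty), α_r is nonempty, and φ is a binary word with |φ|₁ = |φ|₀ (possibly empty). -/
lemma prefix_append_cases {p a b : List Bool} (h : p <+: a ++ b) :
    p <+: a ∨ ∃ q, q <+: b ∧ p = a ++ q := by
  obtain ⟨s, hs⟩ := h
  rcases List.append_eq_append_iff.mp hs with ⟨x, hx1, hx2⟩ | ⟨x, hx1, hx2⟩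
  · exact Or.inl ⟨x, hx1.symm⟩
  · exact Or.inr ⟨x, ⟨s, hx2.symm⟩, hx1⟩

lemma dyck_nil : IsDyck [] :=
  ⟨rfl, fun p hp => by simp [List.prefix_nil.mp hp]⟩

lemma dyck_append {a b : List Bool} (ha : IsDyck a) (hb : IsDyck b) :
    IsDyck (a ++ b) := by
  constructor
  · simp [List.count_append, ha.1, hb.1]
  · intro p hp
    rcases prefix_append_cases hp with h | ⟨q, hq, rfl⟩
    · exact ha.2 p h
    · have := hb.2 q hq
      simp only [List.count_append, ha.1]
      omega

lemma dyck_wrap {a : List Bool} (ha : IsDyck a) :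
    IsDyck (true :: (a ++ [false])) := by
  constructor
  · simp [List.count_append, List.count_cons, ha.1]
  · intro p hp
    rcases p with _ | ⟨x, q⟩
    · simp
    · rw [List.cons_prefix_cons] at hp
      obtain ⟨rfl, hq⟩ := hp
      rcases prefix_append_cases hq with h | ⟨q', hq', rfl⟩
      · have := ha.2 q h
        simp [List.count_cons]; omega
      · have h1 := ha.1
        have hf : q'.count false ≤ 1 := by
          have := hq'.count_le false; simpa using this
        have htr : q'.count true ≤ 0 := by
          have := hq'.count_le true; simpa using this
        simp [List.count_append, List.count_cons, h1]; omega

lemma exists_split : ∀ n (u : List Bool), u.length ≤ n →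
    u.count true + 1 ≤ u.count false →
    ∃ α u', IsDyck α ∧ u = α ++ false :: u' := by
  intro n
  induction n with
  | zero =>
    intro u hu hc
    have : u = [] := List.length_eq_zero_iff.mp (Nat.le_zero.mp hu)
    subst this; simp at hc
  | succ n ih =>
    intro u hu hc
    match u with
    | [] => simp at hc
    | false :: t => exact ⟨[], t, dyck_nil, rfl⟩
    | true :: t =>
      simp [List.count_cons] at hc hu
      have hc' : t.count true + 2 ≤ t.count false := by omega
      obtain ⟨α, u'', hα, ht⟩ := ih t (by omega) (by omega)
      have hlen : u''.length ≤ n := by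
        have := congrArg List.length ht
        simp at this; omega
      have hcu'' : u''.count true + 1 ≤ u''.count false := by
        rw [ht] at hc'
        simp [List.count_append, List.count_cons, hα.1] at hc'; omega
      obtain ⟨β, u', hβ, hu''⟩ := ih u'' hlen hcu''
      refine ⟨true :: (α ++ [false]) ++ β, u', dyck_append (dyck_wrap hα) hβ, ?_⟩
      rw [ht, hu'']; simp

lemma main_rec : ∀ r (u : List Bool), u.count false = u.count true + r →
    ∃ (αs : List (List Bool)) (φ : List Bool),
      αs.length = r ∧ (∀ a ∈ αs, IsDyck a) ∧
      φ.count true = φ.count false ∧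
      u = (αs.map (fun a => a ++ [false])).flatten ++ φ := by
  intro r
  induction r with
  | zero =>
    intro u h
    exact ⟨[], u, rfl, by simp, by omega, by simp⟩
  | succ r ih =>
    intro u h
    obtain ⟨α, u', hα, rfl⟩ := exists_split u.length u le_rfl (by omega)
    have h' : u'.count false = u'.count true + r := by
      simp [List.count_append, List.count_cons, hα.1] at h; omega
    obtain ⟨αs, φ, h1, h2, h3, rfl⟩ := ih u' h'
    refine ⟨α :: αs, φ, by simp [h1], ?_, h3, by simp⟩
    intro a ha
    rcases List.mem_cons.mp ha with rfl | ha
    · exact hα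
    · exact h2 a ha

/-- A binary word beginning with 1, ending with 0, with `r > 0` more 0s
than 1s, decomposes as `α_r·0·α_{r-1}·0·⋯·0·α₁·0·φ` where each `α_j` is a (possibly
empty) Dyck word, `α_r` is nonempty, and `φ` is balanced (possibly empty).
Here `αs = [α_r, α_{r-1}, …, α₁]`. -/
theorem decomposition_neg_height (w : List Bool) (r : ℕ) (hr : 0 < r)
    (hhd : w.head? = some true) (hlast : w.getLast? = some false)
    (hcount : w.count false = w.count true + r) :
    ∃ (αs : List (List Bool)) (φ : List Bool),
      αs.length = r ∧
      (∀ a ∈ αs, IsDyck a) ∧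
      αs.head? ≠ some [] ∧
      φ.count true = φ.count false ∧
      w = (αs.map (fun a => a ++ [false])).flatten ++ φ := by
  obtain ⟨αs, φ, h1, h2, h3, h4⟩ := main_rec r w hcount
  refine ⟨αs, φ, h1, h2, ?_, h3, h4⟩
  intro hcontra
  match αs, h1 with
  | a :: rest, h1 =>
    have ha : a = [] := by simpa using hcontra
    subst ha
    rw [h4] at hhd
    simp at hhd
end
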